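/- Let n ≥ 1 and p < 0. For every compact set K ⊆ ℝⁿ containing more than one point, cap_p(K) ≥ 2^{1/p} · diam(K); equivalently, diam(K)/cap_p(K) ≤ 2^{−1/p}, with equality for every two-point set. Thus each two-point set maximizes the ratio diam(K)/cap_p(K). -/

import Mathlib

open MeasureTheory Metric Set ENNReal Filter

noncomputable section

namespace Riesz

variable {E : Type*} [MeasurableSpace E] [PseudoMetricSpace E]

/-- Borel probability measures supported on `K` (i.e. giving full mass to `K`). -/
def probOn (K : Set E) : Set (Measure E) :=
  {μ | IsProbabilityMeasure μ ∧ μ Kᶜ = 0}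

/-- The Riesz `p`-energy `∬ |x-y|^{-p} dμ dμ` of a measure `μ`, valued in `ℝ≥0∞`.
(The kernel `(dist x y)^{-p}`, computed in `ℝ≥0∞`, is `∞` on the diagonal when `p > 0`
and `0` on the diagonal when `p < 0`.) -/
def energyOf (p : ℝ) (μ : Measure E) : ℝ≥0∞ :=
  ∫⁻ z : E × E, (ENNReal.ofReal (dist z.1 z.2)) ^ (-p) ∂(μ.prod μ)

/-- The Riesz `p`-energy of a set `K`, for `p ≠ 0`: a supremum over probability measures
on `K` when `p < 0`, an infimum when `p > 0`.  (For `K = ∅` this gives `0` when `p < 0`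
and `∞` when `p > 0`.) -/
def energy (p : ℝ) (K : Set E) : ℝ≥0∞ :=
  if p < 0 then ⨆ μ ∈ probOn K, energyOf p μ
  else ⨅ μ ∈ probOn K, energyOf p μ

/-- The logarithmic energy `∬ log (1/|x-y|) dμ dμ` of a measure, as an extended real:
the positive part (with value `∞` on the diagonal) minus the negative part. -/
def logEnergyOf (μ : Measure E) : EReal :=
  ((∫⁻ z : E × E, (if dist z.1 z.2 = 0 then ⊤ else
      ENNReal.ofReal (Real.log (1 / dist z.1 z.2))) ∂(μ.prod μ) : ℝ≥0∞) : EReal)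
  - ((∫⁻ z : E × E, ENNReal.ofReal (Real.log (dist z.1 z.2)) ∂(μ.prod μ) : ℝ≥0∞) : EReal)

/-- The logarithmic energy of a set `K`: infimum over probability measures on `K`. -/
def logEnergy (K : Set E) : EReal :=
  ⨅ μ ∈ probOn K, logEnergyOf μ

/-- The Riesz `p`-capacity of a set: `V_p(K)^{-1/p}` for `p ≠ 0`, and the logarithmic
capacity `exp(-V_log(K))` for `p = 0`. -/
def cap (p : ℝ) (K : Set E) : ℝ :=
  if p = 0 then
    (if logEnergy K = ⊤ then 0 else Real.exp (-(logEnergy K).toReal))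
  else ((energy p K).toReal) ^ (-1 / p)

/-- `μ` is a `p`-equilibrium measure of `K`: a probability measure on `K` whose
`p`-energy attains the optimal `p`-energy of `K`. -/
def IsEquilibrium (p : ℝ) (K : Set E) (μ : Measure E) : Prop :=
  μ ∈ probOn K ∧ energyOf p μ = energy p K

/-- A set `Z` has inner `p`-capacity zero: every compact subset has `p`-capacity zero. -/
def InnerCapZero (p : ℝ) (Z : Set E) : Prop :=
  ∀ Z' ⊆ Z, IsCompact Z' → cap p Z' = 0

end Riesz

end

/-! For `p < 0` the kernel `|x - y|^{-p}` vanishes on the diagonal and is at most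
`(diam K)^{-p}` on `K × K`, so `V_p(K)` is finite. Half of the Dirac masses at two points at
distance `d` has energy `d^{-p}/2`, whence `cap_p K ≥ 2^{1/p} d` for every pair of points of `K`,
and so `cap_p K ≥ 2^{1/p} diam K`. On a two-point set a probability measure with masses `a`, `b`
has energy `2ab d^{-p} ≤ d^{-p}/2`, so there the bound is an equality. -/

namespace Riesz

section Measures

variable {E : Type*} [MeasurableSpace E]

lemma ae_mem_prod_of_mem_probOn {K : Set E} {μ : Measure E} (hμ : μ ∈ probOn K) :
    ∀ᵐ z ∂μ.prod μ, z.1 ∈ K ∧ z.2 ∈ K := by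
  have := hμ.1
  have hK : ∀ᵐ x ∂μ, x ∈ K := mem_ae_iff.mpr hμ.2
  filter_upwards [Measure.quasiMeasurePreserving_fst.ae hK,
    Measure.quasiMeasurePreserving_snd.ae hK] with z h₁ h₂ using ⟨h₁, h₂⟩

noncomputable def halfDirac (x y : E) : Measure E :=
  (2 : ℝ≥0∞)⁻¹ • (Measure.dirac x + Measure.dirac y)

variable [MeasurableSingletonClass E]

lemma halfDirac_mem_probOn {K : Set E} {x y : E} (hx : x ∈ K) (hy : y ∈ K) :
    halfDirac x y ∈ probOn K := by
  refine ⟨⟨?_⟩, ?_⟩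
  · simp [halfDirac, ENNReal.inv_two_add_inv_two]
  · simp [halfDirac, hx, hy]

lemma two_mul_mul_le_inv_two_of_add_le_one {a b : ℝ≥0∞} (h : a + b ≤ 1) :
    2 * (a * b) ≤ 2⁻¹ := by
  have ha : a ≠ ⊤ := ne_top_of_le_ne_top one_ne_top (le_self_add.trans h)
  have hb : b ≠ ⊤ := ne_top_of_le_ne_top one_ne_top (le_add_self.trans h)
  lift a to NNReal using ha
  lift b to NNReal using hb
  rw [← ENNReal.coe_two, ← ENNReal.coe_inv two_ne_zero]
  norm_cast at h ⊢
  rw [← NNReal.coe_le_coe] at h ⊢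
  push_cast at h ⊢
  nlinarith [sq_nonneg ((a : ℝ) - b), a.2, b.2]

lemma prod_pair_swap_le {μ : Measure E} [IsProbabilityMeasure μ] {x y : E} (hxy : x ≠ y) :
    μ.prod μ ({x} ×ˢ {y} ∪ {y} ×ˢ {x}) ≤ 2⁻¹ := by
  have hsum : μ {x} + μ {y} ≤ 1 := by
    rw [← measure_union (disjoint_singleton.mpr hxy) (measurableSet_singleton y)]
    exact prob_le_one
  calc μ.prod μ ({x} ×ˢ {y} ∪ {y} ×ˢ {x})
      ≤ μ.prod μ ({x} ×ˢ {y}) + μ.prod μ ({y} ×ˢ {x}) := measure_union_le _ _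
    _ = 2 * (μ {x} * μ {y}) := by
        rw [Measure.prod_prod, Measure.prod_prod, mul_comm (μ {y}), two_mul]
    _ ≤ 2⁻¹ := two_mul_mul_le_inv_two_of_add_le_one hsum

end Measures

variable {E : Type*} [MeasurableSpace E] [PseudoMetricSpace E] {p : ℝ}

lemma energyOf_le_of_forall_dist_le (hp : p ≤ 0) {K : Set E} {D : ℝ}
    (hD : ∀ x ∈ K, ∀ y ∈ K, dist x y ≤ D) {μ : Measure E} (hμ : μ ∈ probOn K) :
    energyOf p μ ≤ ENNReal.ofReal D ^ (-p) := by
  have := hμ.1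
  calc energyOf p μ ≤ ∫⁻ _ : E × E, ENNReal.ofReal D ^ (-p) ∂μ.prod μ := by
        refine lintegral_mono_ae ?_
        filter_upwards [ae_mem_prod_of_mem_probOn hμ] with z hz
        gcongr
        · linarith
        · exact hD _ hz.1 _ hz.2
    _ = ENNReal.ofReal D ^ (-p) := by simp

lemma energy_le_diam (hp : p < 0) {K : Set E} (hK : Bornology.IsBounded K) :
    energy p K ≤ ENNReal.ofReal (diam K) ^ (-p) := by
  rw [energy, if_pos hp]
  exact iSup₂_le fun μ ↦
    energyOf_le_of_forall_dist_le hp.le fun x hx y hy ↦ dist_le_diam_of_mem hK hx hy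

lemma energy_ne_top (hp : p < 0) {K : Set E} (hK : Bornology.IsBounded K) :
    energy p K ≠ ⊤ :=
  ne_top_of_le_ne_top (ENNReal.rpow_ne_top_of_nonneg (by linarith) ENNReal.ofReal_ne_top)
    (energy_le_diam hp hK)

noncomputable def twoPointEnergy (p d : ℝ) : ℝ≥0∞ := ENNReal.ofReal d ^ (-p) * 2⁻¹

lemma cap_nonneg (p : ℝ) (K : Set E) : 0 ≤ cap p K := by
  unfold cap
  split_ifs <;> positivity

variable [MeasurableSingletonClass E]

lemma energyOf_halfDirac (hp : p < 0) (x y : E) :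
    energyOf p (halfDirac x y) = twoPointEnergy p (dist x y) := by
  simp [energyOf, halfDirac, Measure.prod_smul_left, Measure.prod_smul_right, Measure.prod_add,
    Measure.add_prod, Measure.dirac_prod_dirac, lintegral_add_measure, dist_comm y x,
    ENNReal.zero_rpow_of_pos (neg_pos.mpr hp)]
  rw [← add_mul, ENNReal.inv_two_add_inv_two, one_mul, twoPointEnergy, mul_comm]

lemma twoPointEnergy_le_energy (hp : p < 0) {K : Set E} {x y : E} (hx : x ∈ K) (hy : y ∈ K) :
    twoPointEnergy p (dist x y) ≤ energy p K := by
  rw [energy, if_pos hp, ← energyOf_halfDirac hp]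
  exact le_iSup₂_of_le (halfDirac x y) (halfDirac_mem_probOn hx hy) le_rfl

lemma energyOf_le_of_mem_probOn_pair (hp : p < 0) {x y : E} (hxy : x ≠ y) {μ : Measure E}
    (hμ : μ ∈ probOn {x, y}) :
    energyOf p μ ≤ twoPointEnergy p (dist x y) := by
  have := hμ.1
  set S : Set (E × E) := {x} ×ˢ {y} ∪ {y} ×ˢ {x}
  calc energyOf p μ
        ≤ ∫⁻ z, S.indicator (fun _ ↦ ENNReal.ofReal (dist x y) ^ (-p)) z ∂μ.prod μ := by
        refine lintegral_mono_ae ?_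
        filter_upwards [ae_mem_prod_of_mem_probOn hμ] with ⟨a, b⟩ hab
        obtain ⟨ha | ha, hb | hb⟩ : (a = x ∨ a = y) ∧ (b = x ∨ b = y) := hab
        all_goals simp [S, ha, hb, hxy, hxy.symm, dist_comm y x,
          ENNReal.zero_rpow_of_pos (neg_pos.mpr hp)]
    _ ≤ ENNReal.ofReal (dist x y) ^ (-p) * μ.prod μ S := lintegral_indicator_const_le _ _
    _ ≤ twoPointEnergy p (dist x y) := by
        unfold twoPointEnergy
        gcongr
        exact prod_pair_swap_le hxy

lemma energy_pair (hp : p < 0) {x y : E} (hxy : x ≠ y) :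
    energy p {x, y} = twoPointEnergy p (dist x y) := by
  refine le_antisymm ?_
    (twoPointEnergy_le_energy hp (mem_insert x {y}) (mem_insert_of_mem x rfl))
  rw [energy, if_pos hp]
  exact iSup₂_le fun μ ↦ energyOf_le_of_mem_probOn_pair hp hxy

lemma toReal_twoPointEnergy_rpow {d : ℝ} (hp : p ≠ 0) (hd : 0 ≤ d) :
    (twoPointEnergy p d).toReal ^ (-1 / p) = 2 ^ (1 / p) * d := by
  have hexp : -p * (-1 / p) = 1 := by field_simp
  rw [twoPointEnergy, ENNReal.toReal_mul, ← ENNReal.toReal_rpow, ENNReal.toReal_ofReal hd,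
    ENNReal.toReal_inv, ENNReal.toReal_ofNat, Real.mul_rpow (by positivity) (by positivity),
    ← Real.rpow_mul hd, hexp, Real.rpow_one, Real.inv_rpow zero_le_two,
    ← Real.rpow_neg zero_le_two, neg_div, neg_neg, mul_comm]

lemma two_rpow_mul_dist_le_cap (hp : p < 0) {K : Set E} (hK : Bornology.IsBounded K) {x y : E}
    (hx : x ∈ K) (hy : y ∈ K) : 2 ^ (1 / p) * dist x y ≤ cap p K := by
  have hexp : 0 ≤ -1 / p := div_nonneg_of_nonpos (by norm_num) hp.le
  rw [cap, if_neg hp.ne, ← toReal_twoPointEnergy_rpow hp.ne dist_nonneg]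
  gcongr
  · exact energy_ne_top hp hK
  · exact twoPointEnergy_le_energy hp hx hy

lemma two_rpow_mul_diam_le_cap (hp : p < 0) {K : Set E} (hK : Bornology.IsBounded K) :
    2 ^ (1 / p) * diam K ≤ cap p K := by
  have h2 : (0 : ℝ) < 2 ^ (1 / p) := by positivity
  rw [mul_comm, ← le_div_iff₀ h2]
  refine diam_le_of_forall_dist_le (div_nonneg (cap_nonneg p K) h2.le) fun x hx y hy ↦ ?_
  rw [le_div_iff₀ h2, mul_comm]
  exact two_rpow_mul_dist_le_cap hp hK hx hy

lemma cap_pair (hp : p < 0) {x y : E} (hxy : x ≠ y) : cap p {x, y} = 2 ^ (1 / p) * dist x y := by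
  rw [cap, if_neg hp.ne, energy_pair hp hxy, toReal_twoPointEnergy_rpow hp.ne dist_nonneg]

end Riesz

theorem statement14_general (n : ℕ) (p : ℝ) (hp : p < 0)
    (K : Set (EuclideanSpace ℝ (Fin n))) (hK : IsCompact K) :
    Riesz.cap p K ≥ (2 : ℝ) ^ (1 / p) * Metric.diam K ∧
    Metric.diam K / Riesz.cap p K ≤ (2 : ℝ) ^ (-1 / p) ∧
    ∀ x y : EuclideanSpace ℝ (Fin n), x ≠ y →
      Metric.diam ({x, y} : Set (EuclideanSpace ℝ (Fin n))) /
        Riesz.cap p ({x, y} : Set (EuclideanSpace ℝ (Fin n))) = (2 : ℝ) ^ (-1 / p) := by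
  have hcap : 2 ^ (1 / p) * diam K ≤ Riesz.cap p K :=
    Riesz.two_rpow_mul_diam_le_cap hp hK.isBounded
  refine ⟨hcap, div_le_of_le_mul₀ (Riesz.cap_nonneg p K) (by positivity) ?_,
    fun x y hxy ↦ ?_⟩
  · calc diam K = 2 ^ (-1 / p) * (2 ^ (1 / p) * diam K) := by
          rw [← mul_assoc, ← Real.rpow_add two_pos, neg_div, neg_add_cancel, Real.rpow_zero,
            one_mul]
      _ ≤ 2 ^ (-1 / p) * Riesz.cap p K := by gcongr
  · rw [Riesz.cap_pair hp hxy, diam_pair, div_mul_cancel_right₀ (dist_pos.mpr hxy).ne', neg_div,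
      Real.rpow_neg zero_le_two]

/-- Minimizing capacity for given diameter: for `n ≥ 1`, `p < 0` and compact `K ⊆ ℝⁿ`
with more than one point, `cap_p(K) ≥ 2^(1/p)·diam K`, equivalently
`diam K / cap_p(K) ≤ 2^(-1/p)`, with equality for every two-point set. -/
theorem statement14 (n : ℕ) (hn : 1 ≤ n) (p : ℝ) (hp : p < 0)
    (K : Set (EuclideanSpace ℝ (Fin n))) (hK : IsCompact K) (hK2 : K.Nontrivial) :
    Riesz.cap p K ≥ (2 : ℝ) ^ (1 / p) * Metric.diam K ∧
    Metric.diam K / Riesz.cap p K ≤ (2 : ℝ) ^ (-1 / p) ∧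
    ∀ x y : EuclideanSpace ℝ (Fin n), x ≠ y →
      Metric.diam ({x, y} : Set (EuclideanSpace ℝ (Fin n))) /
        Riesz.cap p ({x, y} : Set (EuclideanSpace ℝ (Fin n))) = (2 : ℝ) ^ (-1 / p) :=
  statement14_general n p hp K hK
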